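/- For every m > 0 there is a constant C such that for all v > 0, all unit vectors ν ∈ ℝ³, and all p ∈ ℝ³, one has |√((p + vν)² + m²) − (v + ν·p)| · (1 + |p|²)^{-1} ≤ C·(1/v). -/

import Mathlib

/-!
Write `s = v + ν·p` and `D = |p|² − (ν·p)² + m² ≥ 0`, so that `|p + vν|² + m² = s² + D` and
`a = √(s² + D) ≥ s`. The identity `D/2 − (a − s)s = (a − s)²/2` gives `(a − s)s ≤ D/2`, and
`v ≤ s + |p|` turns this into `(a − s)v ≤ D/2 + (a − s)|p|`. Finally `s ≥ −|p|` gives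
`a − s ≤ |s| − s + √D ≤ 2|p| + √D`, so `(a − s)v = O(1 + |p|²)` uniformly in `v` and `ν`.
-/

open scoped RealInnerProductSpace

noncomputable section

abbrev E3 := EuclideanSpace ℝ (Fin 3)

namespace Real

theorem sub_mul_self_le_of_sq_eq {a s D : ℝ} (h : a ^ 2 = s ^ 2 + D) : (a - s) * s ≤ D / 2 := by
  nlinarith [sq_nonneg (a - s)]

theorem sqrt_sq_add_le_abs_add_sqrt (s : ℝ) {D : ℝ} (hD : 0 ≤ D) : √(s ^ 2 + D) ≤ |s| + √D := by
  rw [sqrt_le_iff]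
  refine ⟨by positivity, ?_⟩
  nlinarith [sq_abs s, sq_sqrt hD, mul_nonneg (abs_nonneg s) (sqrt_nonneg D)]

end Real

section UnitVector

variable {E : Type*} [NormedAddCommGroup E] [InnerProductSpace ℝ E] {ν : E}

theorem inner_sq_le_norm_sq_of_norm_eq_one (hν : ‖ν‖ = 1) (p : E) : ⟪ν, p⟫ ^ 2 ≤ ‖p‖ ^ 2 := by
  simpa [hν] using sq_le_sq.2 ((abs_real_inner_le_norm ν p).trans (le_abs_self _))

theorem norm_add_smul_sq_of_norm_eq_one (hν : ‖ν‖ = 1) (p : E) (v : ℝ) :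
    ‖p + v • ν‖ ^ 2 = (v + ⟪ν, p⟫) ^ 2 + (‖p‖ ^ 2 - ⟪ν, p⟫ ^ 2) := by
  rw [norm_add_sq_real, real_inner_smul_right, norm_smul, hν, real_inner_comm, Real.norm_eq_abs,
    mul_one, sq_abs]
  ring

theorem add_inner_le_sqrt_norm_add_smul_sq_add_sq (hν : ‖ν‖ = 1) (p : E) (v m : ℝ) :
    v + ⟪ν, p⟫ ≤ √(‖p + v • ν‖ ^ 2 + m ^ 2) := by
  apply Real.le_sqrt_of_sq_le
  nlinarith [norm_add_smul_sq_of_norm_eq_one hν p v, inner_sq_le_norm_sq_of_norm_eq_one hν p,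
    sq_nonneg m]

theorem sqrt_norm_add_smul_sq_add_sq_sub_mul_le (hν : ‖ν‖ = 1) (p : E) {v : ℝ} (hv : 0 ≤ v)
    (m : ℝ) :
    (√(‖p + v • ν‖ ^ 2 + m ^ 2) - (v + ⟪ν, p⟫)) * v ≤ (4 + m ^ 2) * (1 + ‖p‖ ^ 2) := by
  set a := √(‖p + v • ν‖ ^ 2 + m ^ 2)
  set t := ⟪ν, p⟫
  set s := v + t
  set P := ‖p‖
  set D := P ^ 2 - t ^ 2 + m ^ 2
  have htP : |t| ≤ P := by simpa [hν] using abs_real_inner_le_norm ν p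
  have hD : 0 ≤ D := by nlinarith [inner_sq_le_norm_sq_of_norm_eq_one hν p, sq_nonneg m]
  have ha : a = √(s ^ 2 + D) := by
    rw [show s ^ 2 + D = ‖p + v • ν‖ ^ 2 + m ^ 2 by
      rw [norm_add_smul_sq_of_norm_eq_one hν p v]; ring]
  have hsa : s ≤ a := add_inner_le_sqrt_norm_add_smul_sq_add_sq hν p v m
  have hvs : v ≤ s + P := by linarith [neg_abs_le t]
  have hgap : a - s ≤ √D + 2 * P := by
    have : |s| ≤ s + 2 * P := abs_le.2 ⟨by linarith [neg_abs_le t], by linarith [abs_nonneg t]⟩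
    linarith [ha ▸ Real.sqrt_sq_add_le_abs_add_sqrt s hD]
  have hamgm : √D * P ≤ (D + P ^ 2) / 2 := by nlinarith [sq_nonneg (√D - P), Real.sq_sqrt hD]
  calc (a - s) * v ≤ (a - s) * (s + P) := mul_le_mul_of_nonneg_left hvs (sub_nonneg.2 hsa)
    _ = (a - s) * s + (a - s) * P := by ring
    _ ≤ D / 2 + (√D + 2 * P) * P :=
        add_le_add (Real.sub_mul_self_le_of_sq_eq (by rw [ha, Real.sq_sqrt (by positivity)]))
          (mul_le_mul_of_nonneg_right hgap (norm_nonneg p))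
    _ ≤ (4 + m ^ 2) * (1 + P ^ 2) := by nlinarith [sq_nonneg t, sq_nonneg (m * P)]

end UnitVector

theorem stmt1_general (m : ℝ) :
    ∃ C : ℝ, ∀ v : ℝ, 0 < v → ∀ ν : E3, ‖ν‖ = 1 → ∀ p : E3,
      |Real.sqrt (‖p + v • ν‖ ^ 2 + m ^ 2) - (v + ⟪ν, p⟫)| * (1 + ‖p‖ ^ 2)⁻¹
        ≤ C * (1 / v) := by
  refine ⟨4 + m ^ 2, fun v hv ν hν p => ?_⟩
  rw [abs_of_nonneg (sub_nonneg.2 (add_inner_le_sqrt_norm_add_smul_sq_add_sq hν p v m)),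
    ← div_eq_mul_inv, mul_one_div, div_le_div_iff₀ (by positivity) hv]
  exact sqrt_norm_add_smul_sq_add_sq_sub_mul_le hν p hv.le m

/-- For every `m > 0` there is a constant `C` such that for all `v > 0`, unit vectors
`ν ∈ ℝ³` and all `p ∈ ℝ³`,
`|√((p + vν)² + m²) − (v + ν·p)| · (1 + |p|²)⁻¹ ≤ C · (1/v)`. -/
theorem stmt1 (m : ℝ) (hm : 0 < m) :
    ∃ C : ℝ, ∀ v : ℝ, 0 < v → ∀ ν : E3, ‖ν‖ = 1 → ∀ p : E3,
      |Real.sqrt (‖p + v • ν‖ ^ 2 + m ^ 2) - (v + ⟪ν, p⟫)| * (1 + ‖p‖ ^ 2)⁻¹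
        ≤ C * (1 / v) :=
  stmt1_general m
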